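/- Let f : ℝ³ → ℂ be twice continuously differentiable and compactly supported, and let v_f(t,x) := (1/4π) ∫_{S²} [ f(x+tω) + t ω·∇f(x+tω) ] dσ(ω) be the free cosine wave propagator applied to f. Then for every t > 0 and every x ∈ ℝ³, |v_f(t,x)| ≤ (1/2π) t^{−1} ∫_{ℝ³} |D²f(y)| dy, where |D²f(y)| denotes the operator norm of the Hessian of f at y; that is, the dispersive estimate ‖cos(t√(−Δ)) f‖_{L^∞_x} ≲ t^{−1} ‖D²f‖_{L¹} holds. -/

import Mathlib

set_option autoImplicit false

open MeasureTheory ENNReal Real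

noncomputable section

/-- `ℝ³` as a Euclidean space. -/
abbrev R3 : Type := EuclideanSpace ℝ (Fin 3)

/-- The surface measure on the unit sphere `S² ⊂ ℝ³`. -/
def sphereMeasure : Measure (Metric.sphere (0 : R3) 1) :=
  (volume : Measure R3).toSphere

/-- The free cosine wave propagator (Kirchhoff formula):
`v_f(t,x) = (1/4π) ∫_{S²} [f(x+tω) + t ω·∇f(x+tω)] dσ(ω)`. -/
def cosProp (f : R3 → ℂ) (t : ℝ) (x : R3) : ℂ :=
  (1 / (4 * π)) • ∫ ω : Metric.sphere (0 : R3) 1,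
    (f (x + t • (ω : R3)) + t • (fderiv ℝ f (x + t • (ω : R3))) (ω : R3)) ∂sphereMeasure

/-!
Along a ray write `φ(s) = f(x + sω)`, so that the Kirchhoff integrand is `φ(t) + tφ'(t)`. Since
`s ↦ (s - 2t)φ'(s) - φ(s)` is a primitive of `(s - 2t)φ''(s)` vanishing at infinity,
`φ(t) + tφ'(t) = ∫_t^∞ (s - 2t)φ''(s) ds`, and `t|s - 2t| ≤ s²` for `s ≥ t` bounds this by
`t⁻¹ ∫_0^∞ s² ‖D²f(x + sω)‖ ds`. Averaging over `ω ∈ S²` and integrating in polar coordinates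
`dy = s² ds dσ(ω)` gives `‖v_f(t, x)‖ ≤ (4π)⁻¹ t⁻¹ ∫ ‖D²f‖`.
-/

open Set Metric Filter Topology

namespace MeasureTheory

variable {F : Type*} [NormedAddCommGroup F]
  {E : Type*} [NormedAddCommGroup E] [NormedSpace ℝ E] [FiniteDimensional ℝ E]
  [MeasurableSpace E] [BorelSpace E] {μ : Measure E} [μ.IsAddHaarMeasure] {g : E → F}

theorem integrable_comp_smul_toSphere_prod (hg : Integrable g μ) :
    Integrable (fun p : sphere (0 : E) 1 × Ioi (0 : ℝ) ↦ g ((p.2 : ℝ) • (p.1 : E)))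
      (μ.toSphere.prod (.volumeIoiPow (Module.finrank ℝ E - 1))) := by
  rw [← μ.measurePreserving_homeomorphUnitSphereProd.integrable_comp_emb
    (Homeomorph.measurableEmbedding _)]
  refine ((integrableOn_iff_comap_subtypeVal (measurableSet_singleton 0).compl).mp
    hg.integrableOn).congr (.of_forall fun z ↦ ?_)
  simp [smul_inv_smul₀ (norm_ne_zero_iff.2 z.2)]

variable [NormedSpace ℝ F]

theorem Measure.integral_volumeIoiPow (n : ℕ) (h : ℝ → F) :
    ∫ r, h r ∂Measure.volumeIoiPow n = ∫ r in Ioi (0 : ℝ), r ^ n • h r := by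
  simp only [Measure.volumeIoiPow, ENNReal.ofReal]
  rw [integral_withDensity_eq_integral_smul (measurable_subtype_coe.pow_const _).real_toNNReal,
    integral_subtype_comap measurableSet_Ioi fun r ↦ Real.toNNReal (r ^ n) • h r]
  refine setIntegral_congr_fun measurableSet_Ioi fun r hr ↦ ?_
  rw [NNReal.smul_def, Real.coe_toNNReal _ (pow_nonneg hr.out.le _)]

theorem integral_comp_smul_toSphere_prod [Nontrivial E] (g : E → F) :
    ∫ p : sphere (0 : E) 1 × Ioi (0 : ℝ), g ((p.2 : ℝ) • (p.1 : E))
      ∂(μ.toSphere.prod (.volumeIoiPow (Module.finrank ℝ E - 1))) = ∫ x, g x ∂μ := by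
  have h := integral_subtype_comap (μ := μ) (measurableSet_singleton 0).compl g
  rw [restrict_compl_singleton] at h
  rw [← h, ← μ.measurePreserving_homeomorphUnitSphereProd.integral_comp
    (Homeomorph.measurableEmbedding _)]
  refine integral_congr_ae (.of_forall fun z ↦ ?_)
  simp [smul_inv_smul₀ (norm_ne_zero_iff.2 z.2)]

theorem Integrable.integral_Ioi_toSphere (hg : Integrable g μ) :
    Integrable (fun ω : sphere (0 : E) 1 ↦
      ∫ r in Ioi (0 : ℝ), r ^ (Module.finrank ℝ E - 1) • g (r • (ω : E))) μ.toSphere :=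
  (integrable_comp_smul_toSphere_prod hg).integral_prod_left.congr
    (.of_forall fun ω ↦ Measure.integral_volumeIoiPow _ fun r ↦ g (r • (ω : E)))

theorem integral_eq_integral_toSphere_integral_Ioi [Nontrivial E] (hg : Integrable g μ) :
    ∫ x, g x ∂μ = ∫ ω : sphere (0 : E) 1,
      (∫ r in Ioi (0 : ℝ), r ^ (Module.finrank ℝ E - 1) • g (r • (ω : E))) ∂μ.toSphere := by
  rw [← integral_comp_smul_toSphere_prod, integral_prod _ (integrable_comp_smul_toSphere_prod hg)]
  exact integral_congr_ae
    (.of_forall fun ω ↦ Measure.integral_volumeIoiPow _ fun r ↦ g (r • (ω : E)))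

end MeasureTheory

theorem HasCompactSupport.of_forall_hasDerivAt {𝕜 F : Type*} [NontriviallyNormedField 𝕜]
    [NormedAddCommGroup F] [NormedSpace 𝕜 F] {φ φ' : 𝕜 → F} (hsupp : HasCompactSupport φ)
    (hφ : ∀ s, HasDerivAt φ (φ' s) s) : HasCompactSupport φ' := by
  simpa only [funext fun s ↦ (hφ s).deriv] using hsupp.deriv

theorem abs_sub_two_mul_le {s t : ℝ} (ht : 0 < t) (hts : t ≤ s) : |s - 2 * t| ≤ t⁻¹ * s ^ 2 := by
  rw [le_inv_mul_iff₀ ht]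
  rcases abs_cases (s - 2 * t) with ⟨h, -⟩ | ⟨h, -⟩ <;> rw [h] <;> nlinarith

section OneDim

variable {F : Type*} [NormedAddCommGroup F] [NormedSpace ℝ F] [CompleteSpace F]
  {φ φ' φ'' : ℝ → F}

theorem add_smul_eq_integral_Ioi (t : ℝ) (hφ : ∀ s, HasDerivAt φ (φ' s) s)
    (hφ' : ∀ s, HasDerivAt φ' (φ'' s) s) (hφ'' : Continuous φ'') (hsupp : HasCompactSupport φ) :
    φ t + t • φ' t = ∫ s in Ioi t, (s - 2 * t) • φ'' s := by
  have hsupp' := hsupp.of_forall_hasDerivAt hφ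
  have hsupp'' := hsupp'.of_forall_hasDerivAt hφ'
  have hprim : ∀ s ∈ Ici t,
      HasDerivAt (fun s ↦ (s - 2 * t) • φ' s - φ s) ((s - 2 * t) • φ'' s) s := by
    intro s _
    refine ((((hasDerivAt_id' s).sub_const (2 * t)).smul (hφ' s)).sub (hφ s)).congr_deriv ?_
    rw [one_smul, add_sub_cancel_right]
  have hlim : Tendsto (fun s ↦ (s - 2 * t) • φ' s - φ s) atTop (𝓝 0) :=
    ((hsupp'.smul_left.sub hsupp).is_zero_at_infty).mono_left atTop_le_cocompact
  have hint : IntegrableOn (fun s ↦ (s - 2 * t) • φ'' s) (Ioi t) :=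
    ((continuous_id.sub continuous_const).smul hφ'').integrable_of_hasCompactSupport
      hsupp''.smul_left |>.integrableOn
  rw [integral_Ioi_of_hasDerivAt_of_tendsto' hprim hint hlim]
  module

theorem norm_add_smul_le_integral_Ioi {t : ℝ} (ht : 0 < t) (hφ : ∀ s, HasDerivAt φ (φ' s) s)
    (hφ' : ∀ s, HasDerivAt φ' (φ'' s) s) (hφ'' : Continuous φ'') (hsupp : HasCompactSupport φ) :
    ‖φ t + t • φ' t‖ ≤ t⁻¹ * ∫ s in Ioi t, s ^ 2 * ‖φ'' s‖ := by
  have hsupp'' := (hsupp.of_forall_hasDerivAt hφ).of_forall_hasDerivAt hφ'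
  rw [add_smul_eq_integral_Ioi t hφ hφ' hφ'' hsupp, ← integral_const_mul]
  refine norm_integral_le_of_norm_le ?_
    (ae_restrict_of_forall_mem measurableSet_Ioi fun s hs ↦ ?_)
  · exact (continuous_const.mul ((continuous_pow 2).mul hφ''.norm)).integrable_of_hasCompactSupport
      hsupp''.norm.mul_left.mul_left |>.integrableOn
  · rw [norm_smul, Real.norm_eq_abs, ← mul_assoc]
    gcongr
    exact abs_sub_two_mul_le ht (le_of_lt hs)

end OneDim

section

variable {E F : Type*} [NormedAddCommGroup E] [NormedSpace ℝ E]
  [NormedAddCommGroup F] [NormedSpace ℝ F] {f : E → F}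

theorem ContDiff.continuous_norm_fderiv_fderiv (hf : ContDiff ℝ 2 f) :
    Continuous fun y ↦ ‖fderiv ℝ (fderiv ℝ f) y‖ :=
  .norm (E := E →L[ℝ] E →L[ℝ] F) ((hf.fderiv_right one_add_one_eq_two.le).continuous_fderiv
    one_ne_zero)

theorem HasCompactSupport.norm_fderiv_fderiv (hsupp : HasCompactSupport f) :
    HasCompactSupport fun y ↦ ‖fderiv ℝ (fderiv ℝ f) y‖ :=
  .norm (E := E →L[ℝ] E →L[ℝ] F) ((hsupp.fderiv (𝕜 := ℝ)).fderiv (𝕜 := ℝ))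

theorem norm_add_smul_fderiv_le_integral_Ioi [CompleteSpace F] (hf : ContDiff ℝ 2 f)
    (hsupp : HasCompactSupport f) {t : ℝ} (ht : 0 < t) (x : E) {ω : E} (hω : ‖ω‖ = 1) :
    ‖f (x + t • ω) + t • fderiv ℝ f (x + t • ω) ω‖
      ≤ t⁻¹ * ∫ r in Ioi 0, r ^ 2 * ‖fderiv ℝ (fderiv ℝ f) (x + r • ω)‖ := by
  have hline : ∀ s : ℝ, HasDerivAt (fun s ↦ x + s • ω) ω s := fun s ↦ by
    simpa using ((hasDerivAt_id s).smul_const ω).const_add x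
  have hemb : IsClosedEmbedding fun s : ℝ ↦ x + s • ω :=
    (Homeomorph.addLeft x).isClosedEmbedding.comp
      (isClosedEmbedding_smul_left (norm_ne_zero_iff.1 (hω ▸ one_ne_zero)))
  have hf' : ContDiff ℝ 1 (fderiv ℝ f) := hf.fderiv_right one_add_one_eq_two.le
  have hD2 : Continuous (fderiv ℝ (fderiv ℝ f)) := hf'.continuous_fderiv one_ne_zero
  have hφ : ∀ s, HasDerivAt (fun s ↦ f (x + s • ω)) (fderiv ℝ f (x + s • ω) ω) s := fun s ↦
    ((hf.differentiable two_ne_zero) _).hasFDerivAt.comp_hasDerivAt s (hline s)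
  have hφ' : ∀ s, HasDerivAt (fun s ↦ fderiv ℝ f (x + s • ω) ω)
      (fderiv ℝ (fderiv ℝ f) (x + s • ω) ω ω) s := fun s ↦
    (ContinuousLinearMap.apply ℝ F ω).hasFDerivAt.comp_hasDerivAt s
      (((hf'.differentiable one_ne_zero) _).hasFDerivAt.comp_hasDerivAt s (hline s))
  have hφ'' : Continuous fun s ↦ fderiv ℝ (fderiv ℝ f) (x + s • ω) ω ω :=
    ((hD2.comp hemb.continuous).clm_apply continuous_const).clm_apply continuous_const
  have hmajorant : Integrable fun r ↦ r ^ 2 * ‖fderiv ℝ (fderiv ℝ f) (x + r • ω)‖ :=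
    ((continuous_pow 2).mul (hf.continuous_norm_fderiv_fderiv.comp hemb.continuous))
      |>.integrable_of_hasCompactSupport
        (hsupp.norm_fderiv_fderiv.comp_isClosedEmbedding hemb).mul_left
  refine (norm_add_smul_le_integral_Ioi ht hφ hφ' hφ''
    (hsupp.comp_isClosedEmbedding hemb)).trans ?_
  gcongr
  calc ∫ s in Ioi t, s ^ 2 * ‖fderiv ℝ (fderiv ℝ f) (x + s • ω) ω ω‖
      ≤ ∫ s in Ioi t, s ^ 2 * ‖fderiv ℝ (fderiv ℝ f) (x + s • ω)‖ := by
        refine integral_mono_of_nonneg (.of_forall fun s ↦ by positivity) hmajorant.integrableOn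
          (.of_forall fun s ↦ ?_)
        dsimp only
        gcongr
        simpa [hω] using (fderiv ℝ (fderiv ℝ f) (x + s • ω)).le_opNorm₂ ω ω
    _ ≤ ∫ r in Ioi 0, r ^ 2 * ‖fderiv ℝ (fderiv ℝ f) (x + r • ω)‖ :=
        setIntegral_mono_set hmajorant.integrableOn (.of_forall fun r ↦ by positivity)
          (Ioi_subset_Ioi ht.le).eventuallyLE

end

theorem cosine_dispersive_estimate (f : R3 → ℂ) (hf : ContDiff ℝ 2 f)
    (hsupp : HasCompactSupport f) :
    ∀ t : ℝ, 0 < t → ∀ x : R3,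
      ‖cosProp f t x‖ ≤ (1 / (2 * π)) * t⁻¹ * ∫ y : R3, ‖fderiv ℝ (fderiv ℝ f) y‖ := by
  intro t ht x
  have hD2 : Integrable fun y : R3 ↦ ‖fderiv ℝ (fderiv ℝ f) y‖ :=
    hf.continuous_norm_fderiv_fderiv.integrable_of_hasCompactSupport hsupp.norm_fderiv_fderiv
  have hdim : Module.finrank ℝ R3 - 1 = 2 := by simp
  have hpolar := integral_eq_integral_toSphere_integral_Ioi (hD2.comp_add_left x)
  have hradial := (hD2.comp_add_left x).integral_Ioi_toSphere
  simp only [hdim, smul_eq_mul] at hpolar hradial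
  calc ‖cosProp f t x‖
      ≤ 1 / (4 * π) * ∫ ω : Metric.sphere (0 : R3) 1,
          t⁻¹ * (∫ r in Ioi 0, r ^ 2 * ‖fderiv ℝ (fderiv ℝ f) (x + r • (ω : R3))‖)
            ∂sphereMeasure := by
        rw [cosProp, norm_smul, Real.norm_of_nonneg (by positivity)]
        gcongr
        exact norm_integral_le_of_norm_le (hradial.const_mul _) (.of_forall fun ω ↦
          norm_add_smul_fderiv_le_integral_Ioi hf hsupp ht x (norm_eq_of_mem_sphere ω))
    _ = 1 / (4 * π) * t⁻¹ * ∫ y : R3, ‖fderiv ℝ (fderiv ℝ f) y‖ := by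
        rw [integral_const_mul, sphereMeasure, ← hpolar, mul_assoc,
          integral_add_left_eq_self fun y ↦ ‖fderiv ℝ (fderiv ℝ f) y‖]
    _ ≤ 1 / (2 * π) * t⁻¹ * ∫ y : R3, ‖fderiv ℝ (fderiv ℝ f) y‖ := by
        gcongr
        linarith [pi_pos]
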